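/- arXiv:2304.04216 — 4 statements merged into one kernel-verified Lean document; each statement's English description precedes it below -/
import Mathlib

section
/- Let φ, ψ : ℝ → ℝ be smooth (C⁴) functions on an interval [y_s, y_n] with Δy = y_n - y_s and midpoint y₀ = (y_s + y_n)/2. Then (1/Δy)∫_{y_s}^{y_n} φψ dy = ((1/Δy)∫_{y_s}^{y_n} φ dy)((1/Δy)∫_{y_s}^{y_n} ψ dy) + (Δy²/12) φ'(y₀) ψ'(y₀) + O(Δy⁴), i.e., the difference between the average of the product and the product of the averages minus the correction term (Δy²/12)φ'(y₀)ψ'(y₀) is bounded by C·Δy⁴ for a constant C depending only on bounds for the derivatives of φ and ψ up to order 4. -/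
open Set
lemma iD_within_eq {f : ℝ → ℝ} {n k : ℕ} (hf : ContDiff ℝ n f) (hk : k ≤ n)
    {a b x : ℝ} (hab : a < b) (hx : x ∈ Icc a b) :
    iteratedDerivWithin k f (Icc a b) x = iteratedDeriv k f x := by
  have h1 : HasFTaylorSeriesUpToOn (n : ℕ∞) f (ftaylorSeries ℝ f) (Icc a b) :=
    (contDiff_iff_ftaylorSeries.mp hf).hasFTaylorSeriesUpToOn _
  have h2 := h1.eq_iteratedFDerivWithin_of_uniqueDiffOn (by exact_mod_cast hk)
    (uniqueDiffOn_Icc hab) hx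
  rw [iteratedDerivWithin, iteratedDeriv, ← h2]
  rfl


lemma taylor4_ge {g : ℝ → ℝ} (hg : ContDiff ℝ 4 g) {M : ℝ}
    (hM : ∀ y, |iteratedDeriv 4 g y| ≤ M) {c y : ℝ} (hcy : c ≤ y) :
    |g y - g c - deriv g c * (y - c) - iteratedDeriv 2 g c * (y - c) ^ 2 / 2
      - iteratedDeriv 3 g c * (y - c) ^ 3 / 6| ≤ M * (y - c) ^ 4 / 6 := by
  rcases eq_or_lt_of_le hcy with rfl | hlt
  · simp
  have hb := taylor_mean_remainder_bound (f := g) (a := c) (b := y) (C := M) (n := 3) hcy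
    (by exact_mod_cast hg.contDiffOn) (right_mem_Icc.mpr hcy)
    (fun z hz => by rw [Real.norm_eq_abs, iD_within_eq hg le_rfl hlt hz]; exact hM z)
  have ht : taylorWithinEval g 3 (Icc c y) c y
      = g c + deriv g c * (y - c) + iteratedDeriv 2 g c * (y - c) ^ 2 / 2
        + iteratedDeriv 3 g c * (y - c) ^ 3 / 6 := by
    rw [taylor_within_apply]
    have h0 := iD_within_eq hg (by norm_num) hlt (left_mem_Icc.mpr hcy) (k := 0)
    have h1 := iD_within_eq hg (by norm_num) hlt (left_mem_Icc.mpr hcy) (k := 1)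
    have h2 := iD_within_eq hg (by norm_num) hlt (left_mem_Icc.mpr hcy) (k := 2)
    have h3 := iD_within_eq hg (by norm_num) hlt (left_mem_Icc.mpr hcy) (k := 3)
    simp [Finset.sum_range_succ, h0, h1, h2, h3, iteratedDeriv_zero, Nat.factorial]
    ring
  rw [ht, Real.norm_eq_abs] at hb
  calc |g y - g c - deriv g c * (y - c) - iteratedDeriv 2 g c * (y - c) ^ 2 / 2
      - iteratedDeriv 3 g c * (y - c) ^ 3 / 6|
      = |g y - (g c + deriv g c * (y - c) + iteratedDeriv 2 g c * (y - c) ^ 2 / 2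
        + iteratedDeriv 3 g c * (y - c) ^ 3 / 6)| := by ring_nf
    _ ≤ M * (y - c) ^ (3 + 1) / (Nat.factorial 3 : ℝ) := hb
    _ = M * (y - c) ^ 4 / 6 := by norm_num [Nat.factorial]

lemma taylor4_pt {g : ℝ → ℝ} (hg : ContDiff ℝ 4 g) {M : ℝ}
    (hM : ∀ y, |iteratedDeriv 4 g y| ≤ M) (c y : ℝ) :
    |g y - g c - deriv g c * (y - c) - iteratedDeriv 2 g c * (y - c) ^ 2 / 2
      - iteratedDeriv 3 g c * (y - c) ^ 3 / 6| ≤ M * (y - c) ^ 4 / 6 := by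
  rcases le_total c y with hcy | hyc
  · exact taylor4_ge hg hM hcy
  · -- reflect
    set G : ℝ → ℝ := fun t => g (2 * c - t) with hG
    have hiD : ∀ (n : ℕ) (t : ℝ),
        iteratedDeriv n G t = (-1 : ℝ) ^ n • iteratedDeriv n g (2 * c - t) := by
      intro n t
      have h1 : G = (fun s => g (2 * c + s)) ∘ (fun t => -t) := by
        funext t; simp [hG, sub_eq_add_neg]
      have h2 : iteratedDeriv n G t
          = (-1 : ℝ) ^ n • iteratedDeriv n (fun s => g (2 * c + s)) (-t) := by
        rw [h1]
        exact iteratedDeriv_comp_neg n (fun s => g (2 * c + s)) t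
      rw [h2, iteratedDeriv_comp_const_add]
      ring_nf
    have hGc : ContDiff ℝ 4 G :=
      hg.comp ((contDiff_const (c := 2*c)).sub contDiff_id)
    have hMG : ∀ t, |iteratedDeriv 4 G t| ≤ M := by
      intro t; rw [hiD]
      norm_num
      exact hM (2 * c - t)
    have key := taylor4_ge hGc hMG (c := c) (y := 2 * c - y) (by linarith)
    have e0 : G (2 * c - y) = g y := by simp [hG]
    have e1 : G c = g c := by norm_num [hG]; ring_nf
    have hcc : 2 * c - c = c := by ring
    have e2 : deriv G c = - deriv g c := by
      have := hiD 1 c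
      rw [hcc] at this
      simpa [iteratedDeriv_one] using this
    have e3 : iteratedDeriv 2 G c = iteratedDeriv 2 g c := by
      have := hiD 2 c
      rw [hcc] at this
      norm_num at this
      exact this
    have e4 : iteratedDeriv 3 G c = - iteratedDeriv 3 g c := by
      have := hiD 3 c
      rw [hcc] at this
      norm_num at this
      exact this
    rw [e0, e1, e2, e3, e4] at key
    calc |g y - g c - deriv g c * (y - c) - iteratedDeriv 2 g c * (y - c) ^ 2 / 2
        - iteratedDeriv 3 g c * (y - c) ^ 3 / 6|
        = |g y - g c - (- deriv g c) * (2 * c - y - c)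
          - iteratedDeriv 2 g c * (2 * c - y - c) ^ 2 / 2
          - (- iteratedDeriv 3 g c) * (2 * c - y - c) ^ 3 / 6| := by ring_nf
      _ ≤ M * (2 * c - y - c) ^ 4 / 6 := key
      _ = M * (y - c) ^ 4 / 6 := by ring_nf

lemma avg_taylor {g : ℝ → ℝ} (hg : ContDiff ℝ 4 g) {M : ℝ}
    (hM : ∀ y, |iteratedDeriv 4 g y| ≤ M) {a b : ℝ} (hab : a < b) :
    |(∫ y in a..b, g y) - ((b - a) * g ((a + b) / 2)
        + (b - a) ^ 3 / 24 * iteratedDeriv 2 g ((a + b) / 2))|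
      ≤ M * (b - a) ^ 5 / 96 := by
  set c : ℝ := (a + b) / 2 with hc
  have hM0 : 0 ≤ M := le_trans (abs_nonneg _) (hM 0)
  set P : ℝ → ℝ := fun y => g c + deriv g c * (y - c) + iteratedDeriv 2 g c * (y - c) ^ 2 / 2
      + iteratedDeriv 3 g c * (y - c) ^ 3 / 6 with hP
  have hbc : b - c = (b - a) / 2 := by rw [hc]; ring
  have hac : a - c = -((b - a) / 2) := by rw [hc]; ring
  have e1 : (∫ y in a..b, (y - c)) = 0 := by
    rw [intervalIntegral.integral_comp_sub_right (fun x => x) c, integral_id, hbc, hac]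
    ring
  have e2 : (∫ y in a..b, (y - c) ^ 2) = (b - a) ^ 3 / 12 := by
    rw [intervalIntegral.integral_comp_sub_right (fun x => x ^ 2) c, integral_pow, hbc, hac]
    norm_num
    ring
  have e3 : (∫ y in a..b, (y - c) ^ 3) = 0 := by
    rw [intervalIntegral.integral_comp_sub_right (fun x => x ^ 3) c, integral_pow, hbc, hac]
    ring
  have i0 : IntervalIntegrable (fun _ : ℝ => g c) MeasureTheory.volume a b :=
    intervalIntegrable_const
  have j1 : IntervalIntegrable (fun y : ℝ => deriv g c * (y - c)) MeasureTheory.volume a b :=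
    (Continuous.intervalIntegrable (by fun_prop) a b)
  have j2 : IntervalIntegrable (fun y : ℝ => iteratedDeriv 2 g c * (y - c) ^ 2 / 2)
      MeasureTheory.volume a b := (Continuous.intervalIntegrable (by fun_prop) a b)
  have j3 : IntervalIntegrable (fun y : ℝ => iteratedDeriv 3 g c * (y - c) ^ 3 / 6)
      MeasureTheory.volume a b := (Continuous.intervalIntegrable (by fun_prop) a b)
  have hPint : ∫ y in a..b, P y
      = (b - a) * g c + (b - a) ^ 3 / 24 * iteratedDeriv 2 g c := by
    have h1 : ∫ y in a..b, P y
        = ((∫ _y in a..b, g c) + (∫ y in a..b, deriv g c * (y - c)))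
          + (∫ y in a..b, iteratedDeriv 2 g c * (y - c) ^ 2 / 2)
          + (∫ y in a..b, iteratedDeriv 3 g c * (y - c) ^ 3 / 6) := by
      rw [← intervalIntegral.integral_add i0 j1,
        ← intervalIntegral.integral_add (i0.add j1) j2,
        ← intervalIntegral.integral_add ((i0.add j1).add j2) j3]
    have c1 : (∫ y in a..b, deriv g c * (y - c)) = 0 := by
      rw [intervalIntegral.integral_const_mul, e1, mul_zero]
    have c2 : (∫ y in a..b, iteratedDeriv 2 g c * (y - c) ^ 2 / 2)
        = iteratedDeriv 2 g c / 2 * ((b - a) ^ 3 / 12) := by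
      simp_rw [show ∀ y : ℝ, iteratedDeriv 2 g c * (y - c) ^ 2 / 2
          = iteratedDeriv 2 g c / 2 * (y - c) ^ 2 from fun y => by ring]
      rw [intervalIntegral.integral_const_mul, e2]
    have c3 : (∫ y in a..b, iteratedDeriv 3 g c * (y - c) ^ 3 / 6) = 0 := by
      simp_rw [show ∀ y : ℝ, iteratedDeriv 3 g c * (y - c) ^ 3 / 6
          = iteratedDeriv 3 g c / 6 * (y - c) ^ 3 from fun y => by ring]
      rw [intervalIntegral.integral_const_mul, e3, mul_zero]
    rw [h1, c1, c2, c3, intervalIntegral.integral_const, smul_eq_mul]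
    ring
  have hsub : (∫ y in a..b, g y) - ∫ y in a..b, P y = ∫ y in a..b, (g y - P y) :=
    (intervalIntegral.integral_sub (hg.continuous.intervalIntegrable a b)
      (((i0.add j1).add j2).add j3)).symm
  have hbnd : ∀ x ∈ Set.uIoc a b, ‖g x - P x‖ ≤ M * ((b - a) / 2) ^ 4 / 6 := by
    intro x hx
    rw [Set.uIoc_of_le hab.le] at hx
    have hxc : |x - c| ≤ (b - a) / 2 := by
      rw [abs_le, hc]; constructor
      · linarith [hx.1]
      · linarith [hx.2]
    have h1 := taylor4_pt hg hM c x
    have h2 : (x - c) ^ 4 ≤ ((b - a) / 2) ^ 4 := by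
      calc (x - c) ^ 4 = |x - c| ^ 4 := by
            rw [← abs_pow, abs_of_nonneg (by positivity)]
        _ ≤ ((b - a) / 2) ^ 4 := pow_le_pow_left₀ (abs_nonneg _) hxc 4
    rw [Real.norm_eq_abs]
    calc |g x - P x| = |g x - g c - deriv g c * (x - c) - iteratedDeriv 2 g c * (x - c) ^ 2 / 2
          - iteratedDeriv 3 g c * (x - c) ^ 3 / 6| := by rw [hP]; ring_nf
      _ ≤ M * (x - c) ^ 4 / 6 := h1
      _ ≤ M * ((b - a) / 2) ^ 4 / 6 := by
          have := mul_le_mul_of_nonneg_left h2 hM0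
          linarith
  have hmain := intervalIntegral.norm_integral_le_of_norm_le_const hbnd
  rw [← hsub, hPint, Real.norm_eq_abs] at hmain
  calc |(∫ y in a..b, g y) - ((b - a) * g c + (b - a) ^ 3 / 24 * iteratedDeriv 2 g c)|
      ≤ M * ((b - a) / 2) ^ 4 / 6 * |b - a| := hmain
    _ = M * (b - a) ^ 5 / 96 := by
        rw [abs_of_nonneg (by linarith : (0:ℝ) ≤ b - a)]; ring

lemma second_deriv_mul {φ ψ : ℝ → ℝ} (hφ : ContDiff ℝ 4 φ) (hψ : ContDiff ℝ 4 ψ) (x : ℝ) :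
    iteratedDeriv 2 (fun y => φ y * ψ y) x
      = iteratedDeriv 2 φ x * ψ x + 2 * deriv φ x * deriv ψ x + φ x * iteratedDeriv 2 ψ x := by
  have hφd : Differentiable ℝ φ := hφ.differentiable (by norm_num)
  have hψd : Differentiable ℝ ψ := hψ.differentiable (by norm_num)
  have hφ3 : ContDiff ℝ 3 (deriv φ) := by
    have := (contDiff_succ_iff_deriv (n := 3)).mp (by exact_mod_cast hφ)
    exact this.2.2
  have hψ3 : ContDiff ℝ 3 (deriv ψ) := by
    have := (contDiff_succ_iff_deriv (n := 3)).mp (by exact_mod_cast hψ)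
    exact this.2.2
  have hφ'd : Differentiable ℝ (deriv φ) := hφ3.differentiable (by norm_num)
  have hψ'd : Differentiable ℝ (deriv ψ) := hψ3.differentiable (by norm_num)
  have hd1 : deriv (fun y => φ y * ψ y) = fun y => deriv φ y * ψ y + φ y * deriv ψ y :=
    funext fun y => deriv_mul (hφd y) (hψd y)
  rw [iteratedDeriv_succ, iteratedDeriv_one, hd1]
  have h2 : deriv (fun y => deriv φ y * ψ y + φ y * deriv ψ y) x
      = (deriv (deriv φ) x * ψ x + deriv φ x * deriv ψ x)
        + (deriv φ x * deriv ψ x + φ x * deriv (deriv ψ) x) := by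
    rw [deriv_fun_add ((hφ'd x).fun_mul (hψd x)) ((hφd x).fun_mul (hψ'd x)),
      deriv_fun_mul (hφ'd x) (hψd x), deriv_fun_mul (hφd x) (hψ'd x)]
  rw [h2, iteratedDeriv_succ, iteratedDeriv_one, iteratedDeriv_succ, iteratedDeriv_one]
  ring

lemma fourth_deriv_mul_bound {φ ψ : ℝ → ℝ} (hφ : ContDiff ℝ 4 φ) (hψ : ContDiff ℝ 4 ψ)
    {M : ℝ} (hφM : ∀ k ≤ 4, ∀ y, |iteratedDeriv k φ y| ≤ M)
    (hψM : ∀ k ≤ 4, ∀ y, |iteratedDeriv k ψ y| ≤ M) (x : ℝ) :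
    |iteratedDeriv 4 (fun y => φ y * ψ y) x| ≤ 16 * M ^ 2 := by
  have hM0 : 0 ≤ M := le_trans (abs_nonneg _) (hφM 0 (by norm_num) 0)
  have h := norm_iteratedFDeriv_mul_le (𝕜 := ℝ) hφ hψ x (n := 4) le_rfl
  rw [norm_iteratedFDeriv_eq_norm_iteratedDeriv, Real.norm_eq_abs] at h
  refine h.trans ?_
  have hb : ∀ i ∈ Finset.range 5, (Nat.choose 4 i : ℝ)
      * ‖iteratedFDeriv ℝ i φ x‖ * ‖iteratedFDeriv ℝ (4 - i) ψ x‖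
      ≤ (Nat.choose 4 i : ℝ) * M ^ 2 := by
    intro i hi
    rw [Finset.mem_range] at hi
    have h1 : ‖iteratedFDeriv ℝ i φ x‖ ≤ M := by
      rw [norm_iteratedFDeriv_eq_norm_iteratedDeriv, Real.norm_eq_abs]
      exact hφM i (by omega) x
    have h2 : ‖iteratedFDeriv ℝ (4 - i) ψ x‖ ≤ M := by
      rw [norm_iteratedFDeriv_eq_norm_iteratedDeriv, Real.norm_eq_abs]
      exact hψM (4 - i) (by omega) x
    have hmm : ‖iteratedFDeriv ℝ i φ x‖ * ‖iteratedFDeriv ℝ (4 - i) ψ x‖ ≤ M * M :=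
      mul_le_mul h1 h2 (norm_nonneg _) hM0
    calc (Nat.choose 4 i : ℝ) * ‖iteratedFDeriv ℝ i φ x‖ * ‖iteratedFDeriv ℝ (4 - i) ψ x‖
        = (Nat.choose 4 i : ℝ) * (‖iteratedFDeriv ℝ i φ x‖ * ‖iteratedFDeriv ℝ (4 - i) ψ x‖) := by
          ring
      _ ≤ (Nat.choose 4 i : ℝ) * (M * M) := by
          exact mul_le_mul_of_nonneg_left hmm (by positivity)
      _ = (Nat.choose 4 i : ℝ) * M ^ 2 := by ring
  calc (∑ i ∈ Finset.range 5, (Nat.choose 4 i : ℝ)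
        * ‖iteratedFDeriv ℝ i φ x‖ * ‖iteratedFDeriv ℝ (4 - i) ψ x‖)
      ≤ ∑ i ∈ Finset.range 5, (Nat.choose 4 i : ℝ) * M ^ 2 := Finset.sum_le_sum hb
    _ = 16 * M ^ 2 := by
        norm_num [Finset.sum_range_succ, Nat.choose]
        ring

lemma avg_taylor' {g : ℝ → ℝ} (hg : ContDiff ℝ 4 g) {M : ℝ}
    (hM : ∀ y, |iteratedDeriv 4 g y| ≤ M) {a b : ℝ} (hab : a < b) :
    |(1 / (b - a)) * (∫ y in a..b, g y) - g ((a + b) / 2)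
        - (b - a) ^ 2 / 24 * iteratedDeriv 2 g ((a + b) / 2)|
      ≤ M * (b - a) ^ 4 / 96 := by
  have hΔ : (0:ℝ) < b - a := by linarith
  have h := avg_taylor hg hM hab
  have heq : (1 / (b - a)) * (∫ y in a..b, g y) - g ((a + b) / 2)
        - (b - a) ^ 2 / 24 * iteratedDeriv 2 g ((a + b) / 2)
      = (1 / (b - a)) * ((∫ y in a..b, g y) - ((b - a) * g ((a + b) / 2)
        + (b - a) ^ 3 / 24 * iteratedDeriv 2 g ((a + b) / 2))) := by
    field_simp
    ring
  rw [heq, abs_mul, abs_of_pos (by positivity : (0:ℝ) < 1 / (b - a))]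
  calc (1 / (b - a)) * |(∫ y in a..b, g y) - ((b - a) * g ((a + b) / 2)
        + (b - a) ^ 3 / 24 * iteratedDeriv 2 g ((a + b) / 2))|
      ≤ (1 / (b - a)) * (M * (b - a) ^ 5 / 96) :=
        mul_le_mul_of_nonneg_left h (by positivity)
    _ = M * (b - a) ^ 4 / 96 := by field_simp

set_option maxHeartbeats 1000000 in
lemma pkp_combine_small {M Δ a b a' b' a2 b2 A1 A2 A3 : ℝ} (hM0 : 0 ≤ M) (hΔ : 0 < Δ)
    (hΔ1 : Δ ≤ 1)
    (ha : |a| ≤ M) (hb : |b| ≤ M) (ha2 : |a2| ≤ M) (hb2 : |b2| ≤ M)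
    (h1 : |A1 - a - Δ ^ 2 / 24 * a2| ≤ M * Δ ^ 4 / 96)
    (h2 : |A2 - b - Δ ^ 2 / 24 * b2| ≤ M * Δ ^ 4 / 96)
    (h3 : |A3 - a * b - Δ ^ 2 / 24 * (a2 * b + 2 * a' * b' + a * b2)| ≤ 16 * M ^ 2 * Δ ^ 4 / 96) :
    |A3 - A1 * A2 - Δ ^ 2 / 12 * a' * b'| ≤ 3 * M ^ 2 * Δ ^ 4 := by
  have hΔ2 : Δ ^ 2 ≤ 1 := by nlinarith
  have hΔ4 : Δ ^ 4 ≤ 1 := by nlinarith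
  have hΔ4p : (0:ℝ) < Δ ^ 4 := by positivity
  set e1 : ℝ := A1 - a - Δ ^ 2 / 24 * a2 with he1
  set e2 : ℝ := A2 - b - Δ ^ 2 / 24 * b2 with he2
  set e3 : ℝ := A3 - a * b - Δ ^ 2 / 24 * (a2 * b + 2 * a' * b' + a * b2) with he3
  clear_value e1 e2 e3
  have hkey : A3 - A1 * A2 - Δ ^ 2 / 12 * a' * b'
      = e3 - e1 * (b + Δ ^ 2 / 24 * b2) - e2 * (a + Δ ^ 2 / 24 * a2) - e1 * e2
        - (Δ ^ 2 / 24) ^ 2 * a2 * b2 := by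
    rw [he1, he2, he3]; ring
  have hfb : |b + Δ ^ 2 / 24 * b2| ≤ 2 * M := by
    have h24 : |Δ ^ 2 / 24 * b2| ≤ 1 / 24 * M := by
      rw [abs_mul, abs_of_nonneg (by positivity : (0:ℝ) ≤ Δ ^ 2 / 24)]
      apply mul_le_mul (by linarith) hb2 (abs_nonneg _) (by norm_num)
    calc |b + Δ ^ 2 / 24 * b2| ≤ |b| + |Δ ^ 2 / 24 * b2| := abs_add_le _ _
      _ ≤ 2 * M := by linarith
  have hfa : |a + Δ ^ 2 / 24 * a2| ≤ 2 * M := by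
    have h24 : |Δ ^ 2 / 24 * a2| ≤ 1 / 24 * M := by
      rw [abs_mul, abs_of_nonneg (by positivity : (0:ℝ) ≤ Δ ^ 2 / 24)]
      apply mul_le_mul (by linarith) ha2 (abs_nonneg _) (by norm_num)
    calc |a + Δ ^ 2 / 24 * a2| ≤ |a| + |Δ ^ 2 / 24 * a2| := abs_add_le _ _
      _ ≤ 2 * M := by linarith
  have hx1 : |e1 * (b + Δ ^ 2 / 24 * b2)| ≤ M * Δ ^ 4 / 96 * (2 * M) := by
    rw [abs_mul]; exact mul_le_mul h1 hfb (abs_nonneg _) (by positivity)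
  have hx2 : |e2 * (a + Δ ^ 2 / 24 * a2)| ≤ M * Δ ^ 4 / 96 * (2 * M) := by
    rw [abs_mul]; exact mul_le_mul h2 hfa (abs_nonneg _) (by positivity)
  have hx3 : |e1 * e2| ≤ M * Δ ^ 4 / 96 * (M * Δ ^ 4 / 96) := by
    rw [abs_mul]; exact mul_le_mul h1 h2 (abs_nonneg _) (by positivity)
  have hx4 : |(Δ ^ 2 / 24) ^ 2 * a2 * b2| ≤ (Δ ^ 2 / 24) ^ 2 * M * M := by
    rw [abs_mul, abs_mul, abs_of_nonneg (by positivity : (0:ℝ) ≤ (Δ ^ 2 / 24) ^ 2)]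
    exact mul_le_mul (mul_le_mul_of_nonneg_left ha2 (by positivity)) hb2 (abs_nonneg _)
      (by positivity)
  rw [hkey]
  have t4 := abs_sub (e3 - e1 * (b + Δ ^ 2 / 24 * b2) - e2 * (a + Δ ^ 2 / 24 * a2) - e1 * e2)
    ((Δ ^ 2 / 24) ^ 2 * a2 * b2)
  have t3 := abs_sub (e3 - e1 * (b + Δ ^ 2 / 24 * b2) - e2 * (a + Δ ^ 2 / 24 * a2)) (e1 * e2)
  have t2 := abs_sub (e3 - e1 * (b + Δ ^ 2 / 24 * b2)) (e2 * (a + Δ ^ 2 / 24 * a2))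
  have t1 := abs_sub e3 (e1 * (b + Δ ^ 2 / 24 * b2))
  have hq3 : M * Δ ^ 4 / 96 * (M * Δ ^ 4 / 96) ≤ M ^ 2 * Δ ^ 4 / 9216 := by
    nlinarith [mul_le_mul_of_nonneg_left hΔ4 (by positivity : (0:ℝ) ≤ M ^ 2 * Δ ^ 4)]
  have hq4 : (Δ ^ 2 / 24) ^ 2 * M * M ≤ M ^ 2 * Δ ^ 4 / 576 := le_of_eq (by ring)
  have hfin : 16 * M ^ 2 * Δ ^ 4 / 96 + M * Δ ^ 4 / 96 * (2 * M) + M * Δ ^ 4 / 96 * (2 * M)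
      + M ^ 2 * Δ ^ 4 / 9216 + M ^ 2 * Δ ^ 4 / 576 ≤ 3 * M ^ 2 * Δ ^ 4 := by
    nlinarith [mul_nonneg (sq_nonneg M) hΔ4p.le]
  linarith [h3, hx1, hx2, hx3, hx4]

lemma pkp_combine_big {M Δ a' b' A1 A2 A3 : ℝ} (hM0 : 0 ≤ M) (hΔ1 : 1 ≤ Δ)
    (ha' : |a'| ≤ M) (hb' : |b'| ≤ M)
    (hA1 : |A1| ≤ M) (hA2 : |A2| ≤ M) (hA3 : |A3| ≤ M * M) :
    |A3 - A1 * A2 - Δ ^ 2 / 12 * a' * b'| ≤ 3 * M ^ 2 * Δ ^ 4 := by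
  have hΔ0 : (0:ℝ) < Δ := lt_of_lt_of_le one_pos hΔ1
  have h12 : 1 ≤ Δ ^ 2 := one_le_pow₀ hΔ1
  have hmm := mul_le_mul_of_nonneg_left h12 (sq_nonneg Δ)
  have hΔ2 : Δ ^ 2 ≤ Δ ^ 4 := by nlinarith [hmm]
  have hΔ41 : 1 ≤ Δ ^ 4 := one_le_pow₀ hΔ1
  have hprod : |A1 * A2| ≤ M * M := by
    rw [abs_mul]; exact mul_le_mul hA1 hA2 (abs_nonneg _) hM0
  have hcorr : |Δ ^ 2 / 12 * a' * b'| ≤ Δ ^ 2 / 12 * M * M := by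
    rw [abs_mul, abs_mul, abs_of_nonneg (by positivity : (0:ℝ) ≤ Δ ^ 2 / 12)]
    exact mul_le_mul (mul_le_mul_of_nonneg_left ha' (by positivity)) hb' (abs_nonneg _)
      (by positivity)
  have tri : |A3 - A1 * A2 - Δ ^ 2 / 12 * a' * b'|
      ≤ |A3| + |A1 * A2| + |Δ ^ 2 / 12 * a' * b'| := by
    calc |A3 - A1 * A2 - Δ ^ 2 / 12 * a' * b'|
        ≤ |A3 - A1 * A2| + |Δ ^ 2 / 12 * a' * b'| := abs_sub _ _
      _ ≤ |A3| + |A1 * A2| + |Δ ^ 2 / 12 * a' * b'| := by linarith [abs_sub A3 (A1 * A2)]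
  refine tri.trans ?_
  nlinarith [hΔ2, hΔ41, sq_nonneg M, hA3, hprod, hcorr,
    mul_le_mul_of_nonneg_left hΔ41 (sq_nonneg M),
    mul_le_mul_of_nonneg_left hΔ2 (sq_nonneg M)]

/-- PKP theorem: the interval average of a product equals the product of interval
averages plus a midpoint-derivative correction of order `Δy²`, with fourth-order
remainder; the constant depends only on a bound `M` for derivatives up to order 4. -/
theorem pkp_theorem (M : ℝ) :
    ∃ C : ℝ, 0 ≤ C ∧ ∀ (φ ψ : ℝ → ℝ), ContDiff ℝ 4 φ → ContDiff ℝ 4 ψ →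
      (∀ k ≤ 4, ∀ y, |iteratedDeriv k φ y| ≤ M) →
      (∀ k ≤ 4, ∀ y, |iteratedDeriv k ψ y| ≤ M) →
      ∀ y_s y_n : ℝ, y_s < y_n →
        |(1 / (y_n - y_s)) * (∫ y in y_s..y_n, φ y * ψ y)
          - ((1 / (y_n - y_s)) * ∫ y in y_s..y_n, φ y)
            * ((1 / (y_n - y_s)) * ∫ y in y_s..y_n, ψ y)
          - ((y_n - y_s) ^ 2 / 12) * deriv φ ((y_s + y_n) / 2) * deriv ψ ((y_s + y_n) / 2)|
        ≤ C * (y_n - y_s) ^ 4 := by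
  refine ⟨3 * M ^ 2, by positivity, ?_⟩
  intro φ ψ hφ hψ hφM hψM y_s y_n hlt
  have hM0 : 0 ≤ M := le_trans (abs_nonneg _) (hφM 0 (by norm_num) 0)
  have hΔ : (0:ℝ) < y_n - y_s := by linarith
  have hφ4 : ∀ y, |iteratedDeriv 4 φ y| ≤ M := hφM 4 le_rfl
  have hψ4 : ∀ y, |iteratedDeriv 4 ψ y| ≤ M := hψM 4 le_rfl
  have hp : ContDiff ℝ 4 (fun y => φ y * ψ y) := hφ.mul hψ
  have hp4 : ∀ y, |iteratedDeriv 4 (fun y => φ y * ψ y) y| ≤ 16 * M ^ 2 :=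
    fun y => fourth_deriv_mul_bound hφ hψ hφM hψM y
  have ha : |φ ((y_s + y_n) / 2)| ≤ M := by simpa using hφM 0 (by norm_num) _
  have hb : |ψ ((y_s + y_n) / 2)| ≤ M := by simpa using hψM 0 (by norm_num) _
  have ha' : |deriv φ ((y_s + y_n) / 2)| ≤ M := by
    have := hφM 1 (by norm_num) ((y_s + y_n) / 2)
    rwa [iteratedDeriv_one] at this
  have hb' : |deriv ψ ((y_s + y_n) / 2)| ≤ M := by
    have := hψM 1 (by norm_num) ((y_s + y_n) / 2)
    rwa [iteratedDeriv_one] at this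
  have ha2 : |iteratedDeriv 2 φ ((y_s + y_n) / 2)| ≤ M := hφM 2 (by norm_num) _
  have hb2 : |iteratedDeriv 2 ψ ((y_s + y_n) / 2)| ≤ M := hψM 2 (by norm_num) _
  rcases le_total (y_n - y_s) 1 with hΔ1 | hΔ1
  · -- fine case
    have h1 := avg_taylor' hφ hφ4 hlt
    have h2 := avg_taylor' hψ hψ4 hlt
    have h3 := avg_taylor' hp hp4 hlt
    rw [second_deriv_mul hφ hψ] at h3
    exact pkp_combine_small hM0 hΔ hΔ1 ha hb ha2 hb2 h1 h2 h3
  · -- crude case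
    have hAφb : |(1 / (y_n - y_s)) * ∫ y in y_s..y_n, φ y| ≤ M := by
      have hint : ∀ x ∈ Set.uIoc y_s y_n, ‖φ x‖ ≤ M := fun x _ => by
        rw [Real.norm_eq_abs]; simpa using hφM 0 (by norm_num) x
      have h := intervalIntegral.norm_integral_le_of_norm_le_const hint
      rw [Real.norm_eq_abs] at h
      rw [abs_mul, abs_of_pos (by positivity : (0:ℝ) < 1 / (y_n - y_s))]
      calc (1 / (y_n - y_s)) * |∫ y in y_s..y_n, φ y|
          ≤ (1 / (y_n - y_s)) * (M * |y_n - y_s|) :=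
            mul_le_mul_of_nonneg_left h (by positivity)
        _ = M := by rw [abs_of_pos hΔ]; field_simp
    have hAψb : |(1 / (y_n - y_s)) * ∫ y in y_s..y_n, ψ y| ≤ M := by
      have hint : ∀ x ∈ Set.uIoc y_s y_n, ‖ψ x‖ ≤ M := fun x _ => by
        rw [Real.norm_eq_abs]; simpa using hψM 0 (by norm_num) x
      have h := intervalIntegral.norm_integral_le_of_norm_le_const hint
      rw [Real.norm_eq_abs] at h
      rw [abs_mul, abs_of_pos (by positivity : (0:ℝ) < 1 / (y_n - y_s))]
      calc (1 / (y_n - y_s)) * |∫ y in y_s..y_n, ψ y|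
          ≤ (1 / (y_n - y_s)) * (M * |y_n - y_s|) :=
            mul_le_mul_of_nonneg_left h (by positivity)
        _ = M := by rw [abs_of_pos hΔ]; field_simp
    have hApb : |(1 / (y_n - y_s)) * ∫ y in y_s..y_n, φ y * ψ y| ≤ M * M := by
      have hint : ∀ x ∈ Set.uIoc y_s y_n, ‖φ x * ψ x‖ ≤ M * M := fun x _ => by
        rw [Real.norm_eq_abs, abs_mul]
        exact mul_le_mul (by simpa using hφM 0 (by norm_num) x)
          (by simpa using hψM 0 (by norm_num) x) (abs_nonneg _) hM0
      have h := intervalIntegral.norm_integral_le_of_norm_le_const hint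
      rw [Real.norm_eq_abs] at h
      rw [abs_mul, abs_of_pos (by positivity : (0:ℝ) < 1 / (y_n - y_s))]
      calc (1 / (y_n - y_s)) * |∫ y in y_s..y_n, φ y * ψ y|
          ≤ (1 / (y_n - y_s)) * (M * M * |y_n - y_s|) :=
            mul_le_mul_of_nonneg_left h (by positivity)
        _ = M * M := by rw [abs_of_pos hΔ]; field_simp
    exact pkp_combine_big hM0 hΔ1 ha' hb' hAφb hAψb hApb
end

section
/- Let φ : ℝ → ℝ be smooth (C²), and let x_{i-1} < x_i < x_{i+1} with Δx₋ = x_i - x_{i-1} and Δx₊ = x_{i+1} - x_i. Define the face averages φ̄₋ = (1/Δx₋)∫_{x_{i-1}}^{x_i} φ and φ̄₊ = (1/Δx₊)∫_{x_i}^{x_{i+1}} φ. Then (Δx₋ + Δx₊) φ(x_i) = Δx₊ φ̄₋ + Δx₋ φ̄₊ + O(h³), where h = max(Δx₋, Δx₊); precisely, the error is bounded by C h³ with C depending only on the sup of |φ''| on [x_{i-1}, x_{i+1}]. -/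
open Set intervalIntegral

set_option maxHeartbeats 1000000 in
/-- Nodal-value interpolation from two adjacent cell averages on a nonuniform mesh:
`(Δx₋ + Δx₊) φ(x_i) = Δx₊ φ̄₋ + Δx₋ φ̄₊ + O(h³)`. -/
theorem nodal_interpolation (M : ℝ) :
    ∃ C : ℝ, 0 ≤ C ∧ ∀ (φ : ℝ → ℝ), ContDiff ℝ 2 φ →
      (∀ x, |iteratedDeriv 2 φ x| ≤ M) →
      ∀ x0 x1 x2 : ℝ, x0 < x1 → x1 < x2 →
        |((x1 - x0) + (x2 - x1)) * φ x1
          - (x2 - x1) * ((1 / (x1 - x0)) * ∫ x in x0..x1, φ x)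
          - (x1 - x0) * ((1 / (x2 - x1)) * ∫ x in x1..x2, φ x)|
        ≤ C * (max (x1 - x0) (x2 - x1)) ^ 3 := by
  refine ⟨2 * |M|, by positivity, ?_⟩
  intro φ hφ hM x0 x1 x2 h01 h12
  have hM0 : 0 ≤ M := le_trans (abs_nonneg _) (hM 0)
  have habs : |M| = M := abs_of_nonneg hM0
  have hdiff : Differentiable ℝ φ := hφ.differentiable two_ne_zero
  have h2 : ContDiff ℝ ((1:WithTop ℕ∞)+1) φ := by rw [one_add_one_eq_two]; exact hφ
  have hd1 : ContDiff ℝ 1 (deriv φ) := (contDiff_succ_iff_deriv.mp h2).2.2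
  have hd1' : Differentiable ℝ (deriv φ) := hd1.differentiable one_ne_zero
  -- Lipschitz bound on deriv φ
  have lip : ∀ u v : ℝ, |deriv φ u - deriv φ v| ≤ M * |u - v| := by
    intro u v
    have := convex_univ.norm_image_sub_le_of_norm_hasDerivWithin_le (f := deriv φ)
      (f' := deriv (deriv φ))
      (fun x _ => (hd1' x).hasDerivAt.hasDerivWithinAt)
      (fun x _ => by
        simpa [Real.norm_eq_abs, iteratedDeriv_succ, iteratedDeriv_one] using hM x)
      (mem_univ v) (mem_univ u)
    simpa [Real.norm_eq_abs] using this
  set D := deriv φ x1 with hD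
  set g : ℝ → ℝ := fun y => φ y - φ x1 - D * (y - x1) with hg
  -- pointwise Taylor bound
  have key : ∀ x : ℝ, |g x| ≤ M * (x - x1)^2 := by
    intro x
    have hgd : ∀ y : ℝ, HasDerivAt g (deriv φ y - D) y := by
      intro y
      have h2' : HasDerivAt (fun y => D * (y - x1)) D y := by
        simpa using ((hasDerivAt_id y).sub_const x1).const_mul D
      exact ((hdiff y).hasDerivAt.sub_const (φ x1)).sub h2'
    have hbound : ∀ y ∈ uIcc x1 x, ‖deriv φ y - D‖ ≤ M * |x - x1| := by
      intro y hy
      have h1 : |y - x1| ≤ |x - x1| := by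
        rw [Set.mem_uIcc] at hy
        rcases hy with ⟨ha, hb⟩ | ⟨ha, hb⟩ <;> rw [abs_le] <;> constructor <;>
          [skip; skip; skip; skip] <;>
          nlinarith [le_abs_self (x - x1), neg_abs_le (x - x1)]
      calc ‖deriv φ y - D‖ ≤ M * |y - x1| := lip y x1
        _ ≤ M * |x - x1| := by nlinarith [abs_nonneg (y - x1)]
    have := (convex_uIcc x1 x).norm_image_sub_le_of_norm_hasDerivWithin_le
      (fun y _ => (hgd y).hasDerivWithinAt) hbound
      (Set.left_mem_uIcc) (Set.right_mem_uIcc)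
    have hgx1 : g x1 = 0 := by simp [hg]
    rw [hgx1, sub_zero, Real.norm_eq_abs, Real.norm_eq_abs] at this
    calc |g x| ≤ M * |x - x1| * |x - x1| := this
      _ = M * (x - x1)^2 := by rw [mul_assoc, ← abs_mul, ← sq, abs_of_nonneg (sq_nonneg _)]
  set a := x1 - x0 with hadef
  set b := x2 - x1 with hbdef
  have ha : 0 < a := sub_pos.mpr h01
  have hb : 0 < b := sub_pos.mpr h12
  have hcont : Continuous φ := hφ.continuous
  have hgc : Continuous g := by
    rw [hg]; fun_prop
  have hint : ∀ u v : ℝ, ∫ x in u..v, φ x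
      = (v - u) * φ x1 + D * (((v - x1)^2 - (u - x1)^2)/2) + ∫ x in u..v, g x := by
    intro u v
    have h1 : ∫ x in u..v, g x
        = (∫ x in u..v, φ x) - (v - u) * φ x1 - D * (((v - x1)^2 - (u - x1)^2)/2) := by
      simp only [hg]
      rw [intervalIntegral.integral_sub (f := fun x => φ x - φ x1) (g := fun x => D * (x - x1))
          (((hcont.sub continuous_const).intervalIntegrable u v) :
            IntervalIntegrable (fun x => φ x - φ x1) MeasureTheory.volume u v)
          (((continuous_const.mul (continuous_id'.sub continuous_const)).intervalIntegrable u v) :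
            IntervalIntegrable (fun x => D * (x - x1)) MeasureTheory.volume u v),
        intervalIntegral.integral_sub (hcont.intervalIntegrable u v) intervalIntegrable_const,
        intervalIntegral.integral_const_mul]
      have hx : ∫ x in u..v, (x - x1) = ((v - x1)^2 - (u - x1)^2)/2 := by
        rw [intervalIntegral.integral_comp_sub_right (fun x => x) x1, integral_id]
      rw [hx, intervalIntegral.integral_const]
      simp only [smul_eq_mul]
    linarith [h1]
  set E1 := ∫ x in x0..x1, g x with hE1def
  set E2 := ∫ x in x1..x2, g x with hE2def
  have hI1 : ∫ x in x0..x1, φ x = a * φ x1 - D * a^2/2 + E1 := by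
    rw [hint x0 x1, hadef]; ring
  have hI2 : ∫ x in x1..x2, φ x = b * φ x1 + D * b^2/2 + E2 := by
    rw [hint x1 x2, hbdef]; ring
  have heq : (a + b) * φ x1 - b * ((1/a) * ∫ x in x0..x1, φ x)
      - a * ((1/b) * ∫ x in x1..x2, φ x) = -((b/a) * E1) - (a/b) * E2 := by
    rw [hI1, hI2]
    field_simp
    ring
  -- bounds on E1 and E2
  have hB1 : |E1| ≤ M * a^2 * a := by
    have h := intervalIntegral.norm_integral_le_of_norm_le_const (C := M * a^2)
      (a := x0) (b := x1) (f := g) ?_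
    · rw [Real.norm_eq_abs] at h
      calc |E1| ≤ M * a^2 * |x1 - x0| := h
        _ = M * a^2 * a := by rw [abs_of_pos ha]
    · intro x hx
      rw [Set.uIoc_of_le h01.le] at hx
      rw [Real.norm_eq_abs]
      calc |g x| ≤ M * (x - x1)^2 := key x
        _ ≤ M * a^2 := by
            have hxa : (x - x1)^2 ≤ a^2 := by rw [hadef]; nlinarith [hx.1, hx.2]
            nlinarith [hM0, hxa]
  have hB2 : |E2| ≤ M * b^2 * b := by
    have h := intervalIntegral.norm_integral_le_of_norm_le_const (C := M * b^2)
      (a := x1) (b := x2) (f := g) ?_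
    · rw [Real.norm_eq_abs] at h
      calc |E2| ≤ M * b^2 * |x2 - x1| := h
        _ = M * b^2 * b := by rw [abs_of_pos hb]
    · intro x hx
      rw [Set.uIoc_of_le h12.le] at hx
      rw [Real.norm_eq_abs]
      calc |g x| ≤ M * (x - x1)^2 := key x
        _ ≤ M * b^2 := by
            have hxb : (x - x1)^2 ≤ b^2 := by rw [hbdef]; nlinarith [hx.1, hx.2]
            nlinarith [hM0, hxb]
  rw [heq]
  have htri : |-((b/a) * E1) - (a/b) * E2| ≤ (b/a) * |E1| + (a/b) * |E2| := by
    calc |-((b/a) * E1) - (a/b) * E2| ≤ |(b/a) * E1| + |(a/b) * E2| := by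
          rw [← abs_neg ((b/a) * E1)] ; exact abs_sub _ _
      _ = (b/a) * |E1| + (a/b) * |E2| := by
          rw [abs_mul, abs_mul, abs_of_pos (div_pos hb ha), abs_of_pos (div_pos ha hb)]
  have hh : 0 < max a b := lt_max_of_lt_left ha
  have hah : a ≤ max a b := le_max_left a b
  have hbh : b ≤ max a b := le_max_right a b
  calc |-((b/a) * E1) - (a/b) * E2| ≤ (b/a) * |E1| + (a/b) * |E2| := htri
    _ ≤ (b/a) * (M * a^2 * a) + (a/b) * (M * b^2 * b) := by
        have h1 : 0 ≤ b/a := (div_pos hb ha).le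
        have h2 : 0 ≤ a/b := (div_pos ha hb).le
        have := abs_nonneg E1
        nlinarith [mul_le_mul_of_nonneg_left hB1 h1, mul_le_mul_of_nonneg_left hB2 h2]
    _ = M * (a^2 * b) + M * (a * b^2) := by field_simp
    _ ≤ 2 * |M| * (max a b)^3 := by
        rw [habs]
        have ha2 : a^2 ≤ (max a b)^2 := pow_le_pow_left₀ ha.le hah 2
        have hb2 : b^2 ≤ (max a b)^2 := pow_le_pow_left₀ hb.le hbh 2
        have h3a : a^2 * b ≤ (max a b)^3 := by
          calc a^2 * b ≤ (max a b)^2 * (max a b) :=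
                mul_le_mul ha2 hbh hb.le (pow_nonneg hh.le 2)
            _ = (max a b)^3 := by ring
        have h3b : a * b^2 ≤ (max a b)^3 := by
          calc a * b^2 = b^2 * a := by ring
            _ ≤ (max a b)^2 * (max a b) :=
                mul_le_mul hb2 hah ha.le (pow_nonneg hh.le 2)
            _ = (max a b)^3 := by ring
        nlinarith [mul_le_mul_of_nonneg_left h3a hM0, mul_le_mul_of_nonneg_left h3b hM0]
end

section
/- Let φ : ℝ → ℝ be C³, and x_{i-1} < x_i < x_{i+1} with Δx₋ = x_i - x_{i-1}, Δx₊ = x_{i+1} - x_i, face averages φ̄₋, φ̄₊ as before. Set f = 2(Δx₊ - Δx₋)/(Δx₋ Δx₊), d = -2Δx₊/(Δx₋(Δx₋ + Δx₊)), e = 2Δx₋/(Δx₊(Δx₋ + Δx₊)). Then φ'(x_i) = f φ(x_i) + d φ̄₋ + e φ̄₊ + O(h²), where h = max(Δx₋, Δx₊), with error constant depending only on sup|φ'''|. -/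
lemma pow_int_right (c x K : ℝ) (k : ℕ) : ∫ t in c..x, K * (t - c)^k = K * (x - c)^(k+1)/(k+1) := by
  rw [intervalIntegral.integral_const_mul, intervalIntegral.integral_comp_sub_right (fun t => t^k) c]
  simp [integral_pow, mul_div_assoc]

lemma pow_int_left (c x K : ℝ) (k : ℕ) : ∫ t in x..c, K * (c - t)^k = K * (c - x)^(k+1)/(k+1) := by
  rw [intervalIntegral.integral_const_mul, intervalIntegral.integral_comp_sub_left (fun t => t^k) c]
  simp [integral_pow, mul_div_assoc]

lemma step_bound (c K : ℝ) (k : ℕ) (g : ℝ → ℝ)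
    (hg : Differentiable ℝ g) (hg' : Continuous (deriv g)) (h0 : g c = 0)
    (hb : ∀ t, |deriv g t| ≤ K * |t - c| ^ k) :
    ∀ x, |g x| ≤ K * |x - c| ^ (k+1) / (k+1) := by
  intro x
  have hcont : ∀ a b : ℝ, IntervalIntegrable (deriv g) MeasureTheory.volume a b :=
    fun a b => hg'.intervalIntegrable a b
  rcases le_total c x with hcx | hxc
  · have ftc : ∫ t in c..x, deriv g t = g x - g c :=
      intervalIntegral.integral_deriv_eq_sub (fun t _ => hg t) (hcont c x)
    rw [h0, sub_zero] at ftc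
    rw [← ftc]
    calc |∫ t in c..x, deriv g t| ≤ ∫ t in c..x, |deriv g t| :=
          intervalIntegral.abs_integral_le_integral_abs hcx
      _ ≤ ∫ t in c..x, K * (t - c)^k := by
          apply intervalIntegral.integral_mono_on hcx
          · exact (hg'.abs).intervalIntegrable c x
          · exact ((continuous_const.mul ((continuous_id.sub continuous_const).pow k))).intervalIntegrable c x
          · intro t ht
            have := hb t
            rwa [abs_of_nonneg (by linarith [ht.1] : (0:ℝ) ≤ t - c)] at this
      _ = K * (x - c)^(k+1)/(k+1) := pow_int_right c x K k
      _ = K * |x - c|^(k+1)/(k+1) := by rw [abs_of_nonneg (by linarith : (0:ℝ) ≤ x - c)]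
  · have ftc : ∫ t in x..c, deriv g t = g c - g x :=
      intervalIntegral.integral_deriv_eq_sub (fun t _ => hg t) (hcont x c)
    rw [h0, zero_sub] at ftc
    have hgx : |g x| = |∫ t in x..c, deriv g t| := by rw [ftc, abs_neg]
    rw [hgx]
    calc |∫ t in x..c, deriv g t| ≤ ∫ t in x..c, |deriv g t| :=
          intervalIntegral.abs_integral_le_integral_abs hxc
      _ ≤ ∫ t in x..c, K * (c - t)^k := by
          apply intervalIntegral.integral_mono_on hxc
          · exact (hg'.abs).intervalIntegrable x c
          · exact ((continuous_const.mul ((continuous_const.sub continuous_id).pow k))).intervalIntegrable x c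
          · intro t ht
            have := hb t
            rwa [abs_sub_comm, abs_of_nonneg (by linarith [ht.2] : (0:ℝ) ≤ c - t)] at this
      _ = K * (c - x)^(k+1)/(k+1) := pow_int_left c x K k
      _ = K * |x - c|^(k+1)/(k+1) := by rw [abs_sub_comm, abs_of_nonneg (by linarith : (0:ℝ) ≤ c - x)]

lemma poly_integral (a b c D A B : ℝ) :
    ∫ t in a..b, (D + A*(t-c) + B*(t-c)^2/2)
      = D*(b-a) + A*((b-c)^2-(a-c)^2)/2 + B*((b-c)^3-(a-c)^3)/6 := by
  have h : ∀ t ∈ Set.uIcc a b,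
      HasDerivAt (fun t => D*t + A*(t-c)^2/2 + B*(t-c)^3/6) (D + A*(t-c) + B*(t-c)^2/2) t := by
    intro t _
    have h1 : HasDerivAt (fun t:ℝ => t - c) 1 t := (hasDerivAt_id t).sub_const c
    have := ((((hasDerivAt_id t).const_mul D).add (((h1.pow 2).const_mul A).div_const 2)).add
      (((h1.pow 3).const_mul B).div_const 6))
    refine this.congr_deriv ?_
    ring
  have hcont : Continuous (fun t : ℝ => D + A*(t-c) + B*(t-c)^2/2) :=
    (continuous_const.add (continuous_const.mul (continuous_id.sub continuous_const))).add
      ((continuous_const.mul ((continuous_id.sub continuous_const).pow 2)).div_const 2)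
  rw [intervalIntegral.integral_eq_sub_of_hasDerivAt h (hcont.intervalIntegrable a b)]
  ring

lemma taylor3_bound (φ : ℝ → ℝ) (hφ : ContDiff ℝ 3 φ) (M c : ℝ)
    (hM : ∀ x, |deriv (deriv (deriv φ)) x| ≤ M) :
    ∀ x, |φ x - (φ c + deriv φ c * (x - c) + deriv (deriv φ) c * (x - c)^2/2)|
      ≤ M/6 * |x - c|^3 := by
  have h3 : ContDiff ℝ ((2:WithTop ℕ∞)+1) φ := by norm_num at hφ ⊢; exact hφ
  have hd0 : Differentiable ℝ φ := (contDiff_succ_iff_deriv.mp h3).1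
  have h2 : ContDiff ℝ 2 (deriv φ) := (contDiff_succ_iff_deriv.mp h3).2.2
  have h2' : ContDiff ℝ ((1:WithTop ℕ∞)+1) (deriv φ) := by norm_num at h2 ⊢; exact h2
  have hd1 : Differentiable ℝ (deriv φ) := (contDiff_succ_iff_deriv.mp h2').1
  have h1 : ContDiff ℝ 1 (deriv (deriv φ)) := (contDiff_succ_iff_deriv.mp h2').2.2
  have h1' : ContDiff ℝ ((0:WithTop ℕ∞)+1) (deriv (deriv φ)) := by norm_num at h1 ⊢; exact h1
  have hd2 : Differentiable ℝ (deriv (deriv φ)) := (contDiff_succ_iff_deriv.mp h1').1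
  have hc3 : Continuous (deriv (deriv (deriv φ))) :=
    ((contDiff_succ_iff_deriv.mp h1').2.2).continuous
  -- level 2
  set g2 : ℝ → ℝ := fun x => deriv (deriv φ) x - deriv (deriv φ) c with hg2def
  have hg2d : Differentiable ℝ g2 := hd2.sub_const _
  have hg2deriv : deriv g2 = deriv (deriv (deriv φ)) := by
    funext t; exact (deriv_sub_const _)
  have hb2 := step_bound c M 0 g2 hg2d (hg2deriv ▸ hc3) (by simp [hg2def])
    (fun t => by rw [hg2deriv]; simpa using hM t)
  have hb2' : ∀ x, |g2 x| ≤ M * |x - c| := by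
    intro x; have := hb2 x; norm_num at this; simpa using this
  -- level 1
  set g1 : ℝ → ℝ := fun x => deriv φ x - deriv φ c - deriv (deriv φ) c * (x - c) with hg1def
  have hg1has : ∀ t, HasDerivAt g1 (g2 t) t := by
    intro t
    have := ((hd1 t).hasDerivAt.sub_const (deriv φ c)).sub
      (((hasDerivAt_id t).sub_const c).const_mul (deriv (deriv φ) c))
    exact this.congr_deriv (by simp [hg2def])
  have hg1d : Differentiable ℝ g1 := fun t => (hg1has t).differentiableAt
  have hg1deriv : deriv g1 = g2 := funext fun t => (hg1has t).deriv
  have hg2cont : Continuous g2 := hd2.continuous.sub continuous_const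
  have hb1 := step_bound c M 1 g1 hg1d (hg1deriv ▸ hg2cont) (by simp [hg1def])
    (fun t => by rw [hg1deriv]; simpa using hb2' t)
  have hb1' : ∀ x, |g1 x| ≤ (M/2) * |x - c|^2 := by
    intro x; have h := hb1 x; norm_num at h; rw [sq_abs]; linarith
  -- level 0
  set g0 : ℝ → ℝ := fun x => φ x - (φ c + deriv φ c * (x - c) + deriv (deriv φ) c * (x - c)^2/2)
    with hg0def
  have hg0has : ∀ t, HasDerivAt g0 (g1 t) t := by
    intro t
    have h1d : HasDerivAt (fun t:ℝ => t - c) 1 t := (hasDerivAt_id t).sub_const c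
    have hder := ((hd0 t).hasDerivAt).sub
      ((((h1d.const_mul (deriv φ c)).const_add (φ c)).add
        (((h1d.pow 2).const_mul (deriv (deriv φ) c)).div_const 2)))
    refine hder.congr_deriv ?_
    simp [hg1def]
    ring
  have hg0d : Differentiable ℝ g0 := fun t => (hg0has t).differentiableAt
  have hg0deriv : deriv g0 = g1 := funext fun t => (hg0has t).deriv
  have hg1cont : Continuous g1 :=
    (hd1.continuous.sub continuous_const).sub
      (continuous_const.mul (continuous_id.sub continuous_const))
  have hb0 := step_bound c (M/2) 2 g0 hg0d (hg0deriv ▸ hg1cont) (by simp [hg0def])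
    (fun t => by rw [hg0deriv]; simpa using hb1' t)
  intro x
  have hx := hb0 x
  norm_num at hx
  calc |φ x - (φ c + deriv φ c * (x - c) + deriv (deriv φ) c * (x - c)^2/2)|
      = |g0 x| := by rw [hg0def]
    _ ≤ M/6 * |x - c|^3 := by nlinarith [abs_nonneg (x - c), pow_nonneg (abs_nonneg (x-c)) 3]

lemma term_bound (a b hh M G : ℝ) (ha : 0 < a) (hb : 0 < b)
    (hah : a ≤ hh) (hbh : b ≤ hh) (hM : 0 ≤ M) (hG : |G| ≤ M/24 * b^4) :
    2*a/(b*(b+a)) * (1/b * |G|) ≤ M/12 * hh^2 := by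
  have hh0 : 0 < hh := lt_of_lt_of_le hb hbh
  calc 2*a/(b*(b+a)) * (1/b * |G|)
      ≤ 2*a/(b*(b+a)) * (1/b * (M/24 * b^4)) := by gcongr
    _ = M/12 * (a * b^2 / (b + a)) := by field_simp; ring
    _ ≤ M/12 * hh^2 := by
        gcongr M/12 * ?_
        rw [div_le_iff₀ (by positivity)]
        nlinarith [mul_le_mul_of_nonneg_left hbh hb.le, sq_nonneg hh, ha.le, hh0.le]

lemma algebra_key (A φ1 B Δm Δp G1 G2 : ℝ) (hm : Δm ≠ 0) (hp : Δp ≠ 0) (hs : Δm + Δp ≠ 0) :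
    A - ((2 * (Δp - Δm) / (Δm * Δp)) * φ1
      + (-(2 * Δp) / (Δm * (Δm + Δp))) * ((1 / Δm) * ((φ1*Δm - A*Δm^2/2 + B*Δm^3/6) + G1))
      + ((2 * Δm) / (Δp * (Δm + Δp))) * ((1 / Δp) * ((φ1*Δp + A*Δp^2/2 + B*Δp^3/6) + G2)))
    = -((-(2 * Δp) / (Δm * (Δm + Δp))) * ((1/Δm) * G1)
        + ((2 * Δm) / (Δp * (Δm + Δp))) * ((1/Δp) * G2)) := by
  field_simp
  ring

set_option maxHeartbeats 1000000 in
/-- Interior-node derivative formula (Eqs. 56–57): `φ'(x_i) = f φ(x_i) + d φ̄₋ + e φ̄₊ + O(h²)`. -/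
theorem interior_derivative_formula (M : ℝ) :
    ∃ C : ℝ, 0 ≤ C ∧ ∀ (φ : ℝ → ℝ), ContDiff ℝ 3 φ →
      (∀ x, |iteratedDeriv 3 φ x| ≤ M) →
      ∀ x0 x1 x2 : ℝ, x0 < x1 → x1 < x2 →
        |deriv φ x1
          - ((2 * ((x2 - x1) - (x1 - x0)) / ((x1 - x0) * (x2 - x1))) * φ x1
            + (-(2 * (x2 - x1)) / ((x1 - x0) * ((x1 - x0) + (x2 - x1))))
                * ((1 / (x1 - x0)) * ∫ x in x0..x1, φ x)
            + ((2 * (x1 - x0)) / ((x2 - x1) * ((x1 - x0) + (x2 - x1))))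
                * ((1 / (x2 - x1)) * ∫ x in x1..x2, φ x))|
        ≤ C * (max (x1 - x0) (x2 - x1)) ^ 2 := by
  refine ⟨max M 0, le_max_right _ _, ?_⟩
  intro φ hφ hM3 x0 x1 x2 h01 h12
  have hMeq : ∀ x, |deriv (deriv (deriv φ)) x| ≤ M := by
    intro x
    have := hM3 x
    rwa [show iteratedDeriv 3 φ x = deriv (deriv (deriv φ)) x by
      simp [iteratedDeriv_succ, iteratedDeriv_one]] at this
  have hM0 : 0 ≤ M := le_trans (abs_nonneg _) (hMeq x1)
  have hMmax : max M 0 = M := max_eq_left hM0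
  rw [hMmax]
  set A := deriv φ x1 with hA
  set B := deriv (deriv φ) x1 with hB
  have hg0b : ∀ x, |φ x - (φ x1 + A * (x - x1) + B * (x - x1)^2/2)| ≤ M/6 * |x - x1|^3 :=
    taylor3_bound φ hφ M x1 hMeq
  set Δm := x1 - x0 with hΔm
  set Δp := x2 - x1 with hΔp
  have hΔm0 : 0 < Δm := by rw [hΔm]; linarith
  have hΔp0 : 0 < Δp := by rw [hΔp]; linarith
  set h := max Δm Δp with hh
  have hmh : Δm ≤ h := le_max_left _ _
  have hph : Δp ≤ h := le_max_right _ _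
  have hh0 : 0 < h := lt_of_lt_of_le hΔm0 hmh
  set P : ℝ → ℝ := fun t => φ x1 + A * (t - x1) + B * (t - x1)^2/2 with hP
  have hPcont : Continuous P := by
    rw [hP]
    exact (continuous_const.add (continuous_const.mul (continuous_id.sub continuous_const))).add
      ((continuous_const.mul ((continuous_id.sub continuous_const).pow 2)).div_const 2)
  have hφcont : Continuous φ := hφ.continuous
  have hGcont : Continuous (fun t => φ t - P t) := hφcont.sub hPcont
  set G1 := ∫ t in x0..x1, (φ t - P t) with hG1
  set G2 := ∫ t in x1..x2, (φ t - P t) with hG2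
  have hsplit : ∀ a b : ℝ, ∫ t in a..b, φ t = (∫ t in a..b, P t) + ∫ t in a..b, (φ t - P t) := by
    intro a b
    rw [← intervalIntegral.integral_add (hPcont.intervalIntegrable a b) (hGcont.intervalIntegrable a b)]
    apply intervalIntegral.integral_congr
    intro t _; ring
  have IP1 : ∫ t in x0..x1, φ t = (φ x1*Δm - A*Δm^2/2 + B*Δm^3/6) + G1 := by
    rw [hsplit x0 x1, hG1]
    congr 1
    rw [hP, poly_integral x0 x1 x1 (φ x1) A B, hΔm]
    ring
  have IP2 : ∫ t in x1..x2, φ t = (φ x1*Δp + A*Δp^2/2 + B*Δp^3/6) + G2 := by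
    rw [hsplit x1 x2, hG2]
    congr 1
    rw [hP, poly_integral x1 x2 x1 (φ x1) A B, hΔp]
    ring
  -- bounds on G1, G2
  have habs : Continuous (fun t => |φ t - P t|) := hGcont.abs
  have hG1b : |G1| ≤ M/24 * Δm^4 := by
    rw [hG1]
    calc |∫ t in x0..x1, (φ t - P t)| ≤ ∫ t in x0..x1, |φ t - P t| :=
          intervalIntegral.abs_integral_le_integral_abs (by linarith)
      _ ≤ ∫ t in x0..x1, (M/6) * (x1 - t)^3 := by
          apply intervalIntegral.integral_mono_on (by linarith)
            (habs.intervalIntegrable x0 x1)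
            (((continuous_const.mul ((continuous_const.sub continuous_id).pow 3))).intervalIntegrable x0 x1)
          intro t ht
          have := hg0b t
          rw [hP]
          calc |φ t - (φ x1 + A * (t - x1) + B * (t - x1)^2/2)| ≤ M/6 * |t - x1|^3 := this
            _ = M/6 * (x1 - t)^3 := by
                rw [abs_sub_comm, abs_of_nonneg (by linarith [ht.2] : (0:ℝ) ≤ x1 - t)]
      _ = M/24 * Δm^4 := by
          rw [pow_int_left x1 x0 (M/6) 3, hΔm]; norm_num; ring
  have hG2b : |G2| ≤ M/24 * Δp^4 := by
    rw [hG2]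
    calc |∫ t in x1..x2, (φ t - P t)| ≤ ∫ t in x1..x2, |φ t - P t| :=
          intervalIntegral.abs_integral_le_integral_abs (by linarith)
      _ ≤ ∫ t in x1..x2, (M/6) * (t - x1)^3 := by
          apply intervalIntegral.integral_mono_on (by linarith)
            (habs.intervalIntegrable x1 x2)
            (((continuous_const.mul ((continuous_id.sub continuous_const).pow 3))).intervalIntegrable x1 x2)
          intro t ht
          have := hg0b t
          rw [hP]
          calc |φ t - (φ x1 + A * (t - x1) + B * (t - x1)^2/2)| ≤ M/6 * |t - x1|^3 := this
            _ = M/6 * (t - x1)^3 := by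
                rw [abs_of_nonneg (by linarith [ht.1] : (0:ℝ) ≤ t - x1)]
      _ = M/24 * Δp^4 := by
          rw [pow_int_right x1 x2 (M/6) 3, hΔp]; norm_num; ring
  -- algebraic identity
  have hΔmne : Δm ≠ 0 := ne_of_gt hΔm0
  have hΔpne : Δp ≠ 0 := ne_of_gt hΔp0
  have hΔsne : Δm + Δp ≠ 0 := by positivity
  have hkey := algebra_key A (φ x1) B Δm Δp G1 G2 hΔmne hΔpne hΔsne
  rw [IP1, IP2]
  rw [hkey]
  have t1 : |(-(2 * Δp) / (Δm * (Δm + Δp))) * ((1/Δm) * G1)| ≤ M/12 * h^2 := by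
    rw [abs_mul, abs_mul, abs_div, abs_neg, abs_of_pos (by positivity : (0:ℝ) < 2*Δp),
      abs_of_pos (by positivity : (0:ℝ) < Δm * (Δm + Δp)),
      abs_of_pos (by positivity : (0:ℝ) < 1/Δm)]
    exact term_bound Δp Δm h M G1 hΔp0 hΔm0 hph hmh hM0 hG1b
  have t2 : |((2 * Δm) / (Δp * (Δm + Δp))) * ((1/Δp) * G2)| ≤ M/12 * h^2 := by
    rw [abs_mul, abs_mul, abs_div, abs_of_pos (by positivity : (0:ℝ) < 2*Δm),
      abs_of_pos (by positivity : (0:ℝ) < Δp * (Δm + Δp)),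
      abs_of_pos (by positivity : (0:ℝ) < 1/Δp), add_comm Δm Δp]
    exact term_bound Δm Δp h M G2 hΔm0 hΔp0 hmh hph hM0 hG2b
  calc |-((-(2 * Δp) / (Δm * (Δm + Δp))) * ((1/Δm) * G1)
          + ((2 * Δm) / (Δp * (Δm + Δp))) * ((1/Δp) * G2))|
      ≤ |(-(2 * Δp) / (Δm * (Δm + Δp))) * ((1/Δm) * G1)|
        + |((2 * Δm) / (Δp * (Δm + Δp))) * ((1/Δp) * G2)| := by
        rw [abs_neg]; exact abs_add_le _ _
    _ ≤ M/12 * h^2 + M/12 * h^2 := add_le_add t1 t2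
    _ ≤ M * h^2 := by nlinarith [sq_nonneg h]
end

section
/- Let φ : ℝ → ℝ be C², let y_s < y_n with Δy_f = y_n - y_s, and suppose Δy_s, Δy_n > 0 are lengths of adjacent intervals [y_s - Δy_s, y_s] and [y_n, y_n + Δy_n]. Let φ̄_s and φ̄_n be the averages of φ over these adjacent intervals, and y₀ = (y_s + y_n)/2. Then φ'(y₀) = (2/(2Δy_f + Δy_s + Δy_n))(φ̄_n - φ̄_s) + O(h), where h = max(Δy_f, Δy_s, Δy_n) and the error is bounded by C h with C depending only on sup|φ''|. -/
open intervalIntegral in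
lemma taylor1_bound {φ : ℝ → ℝ} {M : ℝ} (hφ : ContDiff ℝ 2 φ)
    (hM : ∀ y, |iteratedDeriv 2 φ y| ≤ M) (a b : ℝ) :
    |φ b - φ a - deriv φ a * (b - a)| ≤ M * (b - a)^2 := by
  have hd1 : Differentiable ℝ φ := hφ.differentiable (by norm_num)
  have h1 : ContDiff ℝ 1 (deriv φ) :=
    (contDiff_succ_iff_deriv.mp (show ContDiff ℝ (1+1) φ from hφ)).2.2
  have hdd : Differentiable ℝ (deriv φ) := h1.differentiable one_ne_zero
  have hiter : ∀ y, iteratedDeriv 2 φ y = deriv (deriv φ) y := by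
    intro y
    rw [show (2:ℕ) = 1+1 from rfl, iteratedDeriv_succ, iteratedDeriv_one]
  have lip : ∀ x y : ℝ, |deriv φ x - deriv φ y| ≤ M * |x - y| := by
    intro x y
    have := Convex.norm_image_sub_le_of_norm_hasDerivWithin_le
      (f := deriv φ) (f' := deriv (deriv φ)) (s := Set.univ) (C := M)
      (fun t _ => ((hdd t).hasDerivAt).hasDerivWithinAt)
      (fun t _ => by rw [Real.norm_eq_abs, ← hiter]; exact hM t)
      convex_univ (Set.mem_univ y) (Set.mem_univ x)
    simpa [Real.norm_eq_abs] using this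
  have hM0 : 0 ≤ M := le_trans (abs_nonneg _) (hM 0)
  set g : ℝ → ℝ := fun y => φ y - deriv φ a * y with hg
  have key := Convex.norm_image_sub_le_of_norm_hasDerivWithin_le
      (f := g) (f' := fun t => deriv φ t - deriv φ a) (s := Set.uIcc a b)
      (C := M * |b - a|)
      (fun t _ => by
        exact (((hd1 t).hasDerivAt).sub
          (by simpa using (hasDerivAt_id t).const_mul (deriv φ a))).hasDerivWithinAt)
      (fun t ht => by
        rw [Real.norm_eq_abs]
        exact le_trans (lip t a) (mul_le_mul_of_nonneg_left (Set.abs_sub_left_of_mem_uIcc ht) hM0))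
      (convex_uIcc a b) Set.left_mem_uIcc Set.right_mem_uIcc
  rw [Real.norm_eq_abs, Real.norm_eq_abs] at key
  have e1 : g b - g a = φ b - φ a - deriv φ a * (b - a) := by simp [hg]; ring
  have e2 : M * |b - a| * |b - a| = M * (b - a)^2 := by
    rw [mul_assoc, ← abs_mul, ← sq, abs_sq]
  rw [e1, e2] at key
  exact key

set_option maxHeartbeats 1000000 in
/-- Face-center derivative from neighboring sliding averages (Eqs. 30–31):
`φ'(y₀) = (2/(2Δy_f + Δy_s + Δy_n))(φ̄_n - φ̄_s) + O(h)`. -/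
theorem face_center_derivative (M : ℝ) :
    ∃ C : ℝ, 0 ≤ C ∧ ∀ (φ : ℝ → ℝ), ContDiff ℝ 2 φ →
      (∀ y, |iteratedDeriv 2 φ y| ≤ M) →
      ∀ y_s y_n Δys Δyn : ℝ, y_s < y_n → 0 < Δys → 0 < Δyn →
        |deriv φ ((y_s + y_n) / 2)
          - (2 / (2 * (y_n - y_s) + Δys + Δyn))
            * (((1 / Δyn) * ∫ y in y_n..(y_n + Δyn), φ y)
              - ((1 / Δys) * ∫ y in (y_s - Δys)..y_s, φ y))|
        ≤ C * max (y_n - y_s) (max Δys Δyn) := by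
  refine ⟨9 * |M|, by positivity, ?_⟩
  intro φ hφ hM y_s y_n Δys Δyn hsn hΔs hΔn
  have hM0 : 0 ≤ M := le_trans (abs_nonneg _) (hM 0)
  have hMabs : |M| = M := abs_of_nonneg hM0
  set y₀ : ℝ := (y_s + y_n) / 2 with hy₀
  set Δyf : ℝ := y_n - y_s with hΔyf
  have hΔf : 0 < Δyf := by simp [hΔyf]; linarith
  set h : ℝ := max Δyf (max Δys Δyn) with hh
  have hh0 : 0 < h := lt_of_lt_of_le hΔf (le_max_left _ _)
  set D : ℝ := 2 * Δyf + Δys + Δyn with hD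
  have hD0 : 0 < D := by positivity
  have hcont : Continuous φ := hφ.continuous
  -- remainder function
  set r : ℝ → ℝ := fun y => φ y - φ y₀ - deriv φ y₀ * (y - y₀) with hr
  have hrcont : Continuous r := by
    apply hcont.sub continuous_const |>.sub
    exact continuous_const.mul (continuous_id.sub continuous_const)
  -- integral decomposition
  have decomp : ∀ a b : ℝ, ∫ y in a..b, φ y =
      φ y₀ * (b - a) + deriv φ y₀ * ((b^2 - a^2)/2 - y₀ * (b - a))
        + ∫ y in a..b, r y := by
    intro a b
    have hlin : ∫ y in a..b, (φ y₀ + deriv φ y₀ * (y - y₀)) =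
        φ y₀ * (b - a) + deriv φ y₀ * ((b^2 - a^2)/2 - y₀ * (b - a)) := by
      have h1 : IntervalIntegrable (fun _ : ℝ => φ y₀ - deriv φ y₀ * y₀)
          MeasureTheory.volume a b := intervalIntegrable_const
      have h2 : IntervalIntegrable (fun y : ℝ => deriv φ y₀ * y)
          MeasureTheory.volume a b :=
        ((by continuity : Continuous fun y : ℝ => deriv φ y₀ * y)).intervalIntegrable a b
      calc ∫ y in a..b, (φ y₀ + deriv φ y₀ * (y - y₀))
          = ∫ y in a..b, ((fun _ : ℝ => φ y₀ - deriv φ y₀ * y₀) y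
              + (fun y : ℝ => deriv φ y₀ * y) y) := by
            congr 1; funext y; ring
        _ = (∫ _ in a..b, (φ y₀ - deriv φ y₀ * y₀))
              + ∫ y in a..b, deriv φ y₀ * y := intervalIntegral.integral_add h1 h2
        _ = φ y₀ * (b - a) + deriv φ y₀ * ((b^2 - a^2)/2 - y₀ * (b - a)) := by
            rw [intervalIntegral.integral_const, intervalIntegral.integral_const_mul,
              integral_id]
            simp; ring
    have : ∫ y in a..b, r y =
        (∫ y in a..b, φ y) - ∫ y in a..b, (φ y₀ + deriv φ y₀ * (y - y₀)) := by
      have h2 : IntervalIntegrable (fun y : ℝ => φ y₀ + deriv φ y₀ * (y - y₀))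
          MeasureTheory.volume a b :=
        ((by continuity : Continuous fun y : ℝ => φ y₀ + deriv φ y₀ * (y - y₀))).intervalIntegrable a b
      rw [← intervalIntegral.integral_sub (hcont.intervalIntegrable a b) h2]
      congr 1; funext y; simp [hr]; ring
    rw [this, hlin]; ring
  -- error bounds
  have rbound : ∀ y : ℝ, |r y| ≤ M * (y - y₀)^2 := by
    intro y
    have := taylor1_bound hφ hM y₀ y
    simpa [hr] using this
  have hKn : ∀ y ∈ Set.uIoc y_n (y_n + Δyn), |r y| ≤ M * (3/2 * h)^2 := by
    intro y hy
    rw [Set.uIoc_of_le (by linarith)] at hy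
    refine le_trans (rbound y) (mul_le_mul_of_nonneg_left ?_ hM0)
    have h1 : y - y₀ ≤ Δyf/2 + Δyn := by
      have := hy.2; simp [hy₀, hΔyf] at *; linarith
    have h2 : 0 ≤ y - y₀ := by
      have := hy.1; simp [hy₀, hΔyf] at *; linarith
    have h3 : Δyf/2 + Δyn ≤ 3/2 * h := by
      have := le_max_left Δyf (max Δys Δyn)
      have := le_trans (le_max_right Δys Δyn) (le_max_right Δyf (max Δys Δyn))
      rw [hh] at *; linarith
    have : (y - y₀)^2 ≤ (Δyf/2 + Δyn)^2 := by nlinarith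
    nlinarith
  have hKs : ∀ y ∈ Set.uIoc (y_s - Δys) y_s, |r y| ≤ M * (3/2 * h)^2 := by
    intro y hy
    rw [Set.uIoc_of_le (by linarith)] at hy
    refine le_trans (rbound y) (mul_le_mul_of_nonneg_left ?_ hM0)
    have h1 : y₀ - y ≤ Δyf/2 + Δys := by
      have := hy.1; simp [hy₀, hΔyf] at *; linarith
    have h2 : 0 ≤ y₀ - y := by
      have := hy.2; simp [hy₀, hΔyf] at *; linarith
    have h3 : Δyf/2 + Δys ≤ 3/2 * h := by
      have := le_max_left Δyf (max Δys Δyn)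
      have := le_trans (le_max_left Δys Δyn) (le_max_right Δyf (max Δys Δyn))
      rw [hh] at *; linarith
    have : (y - y₀)^2 ≤ (Δyf/2 + Δys)^2 := by nlinarith
    nlinarith
  set En : ℝ := ∫ y in y_n..(y_n + Δyn), r y with hEn
  set Es : ℝ := ∫ y in (y_s - Δys)..y_s, r y with hEs
  have hEnb : |En| ≤ M * (3/2 * h)^2 * Δyn := by
    have := intervalIntegral.norm_integral_le_of_norm_le_const (f := r)
      (a := y_n) (b := y_n + Δyn) (C := M * (3/2*h)^2)
      (fun y hy => by rw [Real.norm_eq_abs]; exact hKn y hy)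
    rw [Real.norm_eq_abs] at this
    simpa [abs_of_pos hΔn] using this
  have hEsb : |Es| ≤ M * (3/2 * h)^2 * Δys := by
    have := intervalIntegral.norm_integral_le_of_norm_le_const (f := r)
      (a := y_s - Δys) (b := y_s) (C := M * (3/2*h)^2)
      (fun y hy => by rw [Real.norm_eq_abs]; exact hKs y hy)
    rw [Real.norm_eq_abs] at this
    simpa [abs_of_pos hΔs, abs_of_nonneg (le_of_lt hΔs)] using this
  -- the key algebraic identity
  have key : deriv φ y₀ - (2 / D)
      * (((1 / Δyn) * ∫ y in y_n..(y_n + Δyn), φ y)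
        - ((1 / Δys) * ∫ y in (y_s - Δys)..y_s, φ y))
      = -(2 / D) * (En / Δyn - Es / Δys) := by
    rw [decomp y_n (y_n + Δyn), decomp (y_s - Δys) y_s, ← hEn, ← hEs]
    simp only [hy₀, hD, hΔyf]
    have hD' : 2 * (y_n - y_s) + Δys + Δyn ≠ 0 := by linarith
    field_simp
    ring
  rw [key]
  rw [abs_mul, abs_neg]
  have step1 : |En / Δyn - Es / Δys| ≤ 2 * (M * (3/2 * h)^2) := by
    have b1 : |En / Δyn| ≤ M * (3/2*h)^2 := by
      rw [abs_div, abs_of_pos hΔn, div_le_iff₀ hΔn]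
      calc |En| ≤ M * (3/2*h)^2 * Δyn := hEnb
        _ = M * (3/2*h)^2 * Δyn := rfl
    have b2 : |Es / Δys| ≤ M * (3/2*h)^2 := by
      rw [abs_div, abs_of_pos hΔs, div_le_iff₀ hΔs]
      exact hEsb
    calc |En / Δyn - Es / Δys| ≤ |En / Δyn| + |Es / Δys| := abs_sub _ _
      _ ≤ 2 * (M * (3/2 * h)^2) := by linarith
  have hDh : h ≤ D := by
    rw [hh, hD]
    exact max_le (by linarith) (max_le (by linarith) (by linarith))
  calc |2 / D| * |En / Δyn - Es / Δys|
      ≤ (2 / D) * (2 * (M * (3/2 * h)^2)) := by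
        rw [abs_div, abs_of_pos hD0, abs_two]
        apply mul_le_mul_of_nonneg_left step1
        positivity
    _ = (9 * M) * (h^2 / D) := by ring
    _ ≤ (9 * M) * h := by
        apply mul_le_mul_of_nonneg_left _ (by linarith)
        rw [div_le_iff₀ hD0]
        nlinarith
    _ = 9 * |M| * h := by rw [hMabs]
end
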